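/- arXiv:1404.7813 — 2 statements merged into one kernel-verified Lean document; each statement's English description precedes it below -/
import Mathlib

section
/- Let C₁, C₂ satisfy the second-order cone disjunctive setup on K₂ⁿ. For any β > 0 with βc₁₀ ≥ c₂₀ and βc₁ − c₂ ∉ ±K₂ⁿ, the inequality 2c₂₀ − (βc₁ + c₂)ᵀx ≤ sqrt( ((βc₁ − c₂)ᵀx)² + N₁(β)(xₙ² − ‖x̃‖₂²) ), where N₁(β) := ‖βc̃₁ − c̃₂‖₂² − (βc₁ₙ − c₂ₙ)², holds for every x in the closed convex hull of C₁ ∪ C₂. -/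
open Set

noncomputable section

/-- First `n` coordinates of `x ∈ ℝ^{n+1}`. -/
def tl {n : ℕ} (x : Fin (n+1) → ℝ) : Fin n → ℝ := fun i => x i.castSucc

/-- The second-order cone in `ℝ^{n+1}`. -/
def soc (n : ℕ) : Set (Fin (n+1) → ℝ) :=
  {x | Real.sqrt (∑ i, (tl x i)^2) ≤ x (Fin.last n)}

/-- Dot product. -/
def dot {n : ℕ} (c x : Fin n → ℝ) : ℝ := ∑ i, c i * x i

lemma W_nonneg_aux (M A ax xn X : ℝ) (hMpos : 0 < M) (hA : A^2 ≤ M)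
    (hcs : ax^2 ≤ M*X) (hx : X ≤ xn^2) (hxn : 0 ≤ xn) : 0 ≤ A*ax + M*xn := by
  nlinarith [mul_le_mul_of_nonneg_left hcs (sq_nonneg A),
    mul_le_mul_of_nonneg_left hx (mul_nonneg (sq_nonneg A) hMpos.le),
    mul_nonneg (mul_nonneg (by linarith : (0:ℝ) ≤ M - A^2) hMpos.le) (sq_nonneg xn),
    mul_nonneg hMpos.le hxn]

lemma sq_prod_aux (Wx dx Wy dy : ℝ) :
    (Wx^2-dx^2)*(Wy^2-dy^2) ≤ (Wx*Wy - dx*dy)^2 := by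
  nlinarith [sq_nonneg (Wx*dy - Wy*dx)]

/-- Scalar core: reverse Cauchy–Schwarz for the hyperbolic form. -/
lemma key_scalar (M A ax ay xn yn X Y P : ℝ)
    (hM : A^2 < M)
    (hcsx : ax^2 ≤ M*X) (hcsy : ay^2 ≤ M*Y)
    (hcsB : (M*P - ax*ay)^2 ≤ (M*X - ax^2)*(M*Y - ay^2))
    (hx : X ≤ xn^2) (hxn : 0 ≤ xn) (hy : Y ≤ yn^2) (hyn : 0 ≤ yn) :
    Real.sqrt (((ax+A*xn)^2 + (M-A^2)*(xn^2 - X)) * ((ay+A*yn)^2 + (M-A^2)*(yn^2-Y)))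
      ≤ (ax+A*xn)*(ay+A*yn) + (M-A^2)*(xn*yn - P) := by
  have hMpos : 0 < M := lt_of_le_of_lt (sq_nonneg A) hM
  obtain ⟨N, hNdef⟩ : ∃ N : ℝ, N = M - A^2 := ⟨_, rfl⟩
  have hN : 0 < N := by rw [hNdef]; linarith
  obtain ⟨Wx, hWxdef⟩ : ∃ W : ℝ, W = A*ax + M*xn := ⟨_, rfl⟩
  obtain ⟨Wy, hWydef⟩ : ∃ W : ℝ, W = A*ay + M*yn := ⟨_, rfl⟩
  have hWx : 0 ≤ Wx := hWxdef ▸ W_nonneg_aux M A ax xn X hMpos hM.le hcsx hx hxn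
  have hWy : 0 ≤ Wy := hWydef ▸ W_nonneg_aux M A ay yn Y hMpos hM.le hcsy hy hyn
  obtain ⟨Dx, hDxdef⟩ : ∃ D : ℝ, D = M*X - ax^2 := ⟨_, rfl⟩
  obtain ⟨Dy, hDydef⟩ : ∃ D : ℝ, D = M*Y - ay^2 := ⟨_, rfl⟩
  obtain ⟨B, hBdef⟩ : ∃ B : ℝ, B = M*P - ax*ay := ⟨_, rfl⟩
  have hDx : 0 ≤ Dx := by rw [hDxdef]; linarith
  have hDy : 0 ≤ Dy := by rw [hDydef]; linarith
  obtain ⟨qx, hqxdef⟩ : ∃ q : ℝ, q = (ax+A*xn)^2 + N*(xn^2 - X) := ⟨_, rfl⟩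
  obtain ⟨qy, hqydef⟩ : ∃ q : ℝ, q = (ay+A*yn)^2 + N*(yn^2 - Y) := ⟨_, rfl⟩
  have hqx : 0 ≤ qx := by rw [hqxdef]; exact add_nonneg (sq_nonneg _) (mul_nonneg hN.le (by linarith))
  have hqy : 0 ≤ qy := by rw [hqydef]; exact add_nonneg (sq_nonneg _) (mul_nonneg hN.le (by linarith))
  have idqx : M*qx = Wx^2 - N*Dx := by rw [hqxdef, hWxdef, hDxdef, hNdef]; ring
  have idqy : M*qy = Wy^2 - N*Dy := by rw [hqydef, hWydef, hDydef, hNdef]; ring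
  have hMqx : 0 ≤ M*qx := mul_nonneg hMpos.le hqx
  have hMqy : 0 ≤ M*qy := mul_nonneg hMpos.le hqy
  obtain ⟨dx, hdxdef⟩ : ∃ d : ℝ, d = Real.sqrt (N*Dx) := ⟨_, rfl⟩
  obtain ⟨dy, hdydef⟩ : ∃ d : ℝ, d = Real.sqrt (N*Dy) := ⟨_, rfl⟩
  have hdxnn : 0 ≤ dx := hdxdef ▸ Real.sqrt_nonneg _
  have hdynn : 0 ≤ dy := hdydef ▸ Real.sqrt_nonneg _
  have hdx2 : dx^2 = N*Dx := by rw [hdxdef]; exact Real.sq_sqrt (mul_nonneg hN.le hDx)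
  have hdy2 : dy^2 = N*Dy := by rw [hdydef]; exact Real.sq_sqrt (mul_nonneg hN.le hDy)
  have hdxW : dx ≤ Wx := by
    have h1 : N*Dx ≤ Wx^2 := by linarith
    calc dx = Real.sqrt (N*Dx) := hdxdef
    _ ≤ Real.sqrt (Wx^2) := Real.sqrt_le_sqrt h1
    _ = Wx := Real.sqrt_sq hWx
  have hdyW : dy ≤ Wy := by
    have h1 : N*Dy ≤ Wy^2 := by linarith
    calc dy = Real.sqrt (N*Dy) := hdydef
    _ ≤ Real.sqrt (Wy^2) := Real.sqrt_le_sqrt h1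
    _ = Wy := Real.sqrt_sq hWy
  have hNB : N*B ≤ dx*dy := by
    have h2 : (N*B)^2 ≤ (N*Dx)*(N*Dy) := by
      calc (N*B)^2 = N^2 * B^2 := by ring
      _ ≤ N^2 * (Dx*Dy) := by
          refine mul_le_mul_of_nonneg_left ?_ (sq_nonneg N)
          rw [hBdef, hDxdef, hDydef]; exact hcsB
      _ = (N*Dx)*(N*Dy) := by ring
    calc N*B ≤ |N*B| := le_abs_self _
    _ = Real.sqrt ((N*B)^2) := (Real.sqrt_sq_eq_abs _).symm
    _ ≤ Real.sqrt ((N*Dx)*(N*Dy)) := Real.sqrt_le_sqrt h2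
    _ = dx*dy := by rw [hdxdef, hdydef]; exact (Real.sqrt_mul (mul_nonneg hN.le hDx) _)
  obtain ⟨Q, hQdef⟩ : ∃ Q : ℝ, Q = (ax+A*xn)*(ay+A*yn) + N*(xn*yn - P) := ⟨_, rfl⟩
  have idQ : M*Q = Wx*Wy - N*B := by rw [hQdef, hWxdef, hWydef, hBdef, hNdef]; ring
  have hdd : dx*dy ≤ Wx*Wy := mul_le_mul hdxW hdyW hdynn hWx
  have hcross : 0 ≤ Wx*Wy - dx*dy := by linarith
  have hMQ : 0 ≤ M*Q := by linarith
  have hQnn : 0 ≤ Q := by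
    have hQeq : Q = (M*Q)/M := by field_simp
    rw [hQeq]; exact div_nonneg hMQ hMpos.le
  have hsq : (Wx^2-dx^2)*(Wy^2-dy^2) ≤ (Wx*Wy - dx*dy)^2 := sq_prod_aux Wx dx Wy dy
  have h3 : (Wx*Wy - dx*dy)^2 ≤ (M*Q)^2 := by
    have : Wx*Wy - dx*dy ≤ M*Q := by linarith
    exact pow_le_pow_left₀ hcross this 2
  have hQ2 : qx*qy ≤ Q^2 := by
    have h4 : M^2*(qx*qy) ≤ M^2*(Q^2) := by
      calc M^2*(qx*qy) = (M*qx)*(M*qy) := by ring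
      _ = (Wx^2 - N*Dx)*(Wy^2 - N*Dy) := by rw [idqx, idqy]
      _ = (Wx^2-dx^2)*(Wy^2-dy^2) := by rw [hdx2, hdy2]
      _ ≤ (Wx*Wy - dx*dy)^2 := hsq
      _ ≤ (M*Q)^2 := h3
      _ = M^2*(Q^2) := by ring
    exact le_of_mul_le_mul_left h4 (by positivity)
  have goal_eq : ((ax+A*xn)^2 + (M-A^2)*(xn^2 - X)) * ((ay+A*yn)^2 + (M-A^2)*(yn^2-Y)) = qx*qy := by
    rw [hqxdef, hqydef, hNdef]
  have goal_eq2 : (ax+A*xn)*(ay+A*yn) + (M-A^2)*(xn*yn - P) = Q := by rw [hQdef, hNdef]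
  rw [goal_eq, goal_eq2]
  calc Real.sqrt (qx*qy) ≤ Real.sqrt (Q^2) := Real.sqrt_le_sqrt hQ2
  _ = Q := Real.sqrt_sq hQnn

lemma sum_sq_comb {n : ℕ} (f g : Fin n → ℝ) (l m : ℝ) :
    ∑ i, (l * f i + m * g i)^2
      = l^2 * (∑ i, (f i)^2) + 2*l*m*(∑ i, f i * g i) + m^2 * (∑ i, (g i)^2) := by
  rw [Finset.mul_sum, Finset.mul_sum, Finset.mul_sum, ← Finset.sum_add_distrib,
    ← Finset.sum_add_distrib]
  exact Finset.sum_congr rfl fun i _ => by ring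

lemma sum_mul_comb {n : ℕ} (a f g : Fin n → ℝ) (l m : ℝ) :
    ∑ i, a i * (l * f i + m * g i)
      = l * (∑ i, a i * f i) + m * (∑ i, a i * g i) := by
  rw [Finset.mul_sum, Finset.mul_sum, ← Finset.sum_add_distrib]
  exact Finset.sum_congr rfl fun i _ => by ring

/-- Convexity-type triangle inequality for `√(∑ ·²)`. -/
lemma sqrt_sum_sq_comb_le {n : ℕ} (f g : Fin n → ℝ) (l m : ℝ) (hl : 0 ≤ l) (hm : 0 ≤ m) :
    Real.sqrt (∑ i, (l * f i + m * g i)^2)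
      ≤ l * Real.sqrt (∑ i, (f i)^2) + m * Real.sqrt (∑ i, (g i)^2) := by
  obtain ⟨X, hX⟩ : ∃ X : ℝ, X = ∑ i, (f i)^2 := ⟨_, rfl⟩
  obtain ⟨Y, hY⟩ : ∃ Y : ℝ, Y = ∑ i, (g i)^2 := ⟨_, rfl⟩
  obtain ⟨P, hP⟩ : ∃ P : ℝ, P = ∑ i, f i * g i := ⟨_, rfl⟩
  have hXnn : 0 ≤ X := hX ▸ Finset.sum_nonneg fun i _ => sq_nonneg _
  have hYnn : 0 ≤ Y := hY ▸ Finset.sum_nonneg fun i _ => sq_nonneg _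
  have hCS : P^2 ≤ X*Y := by rw [hP, hX, hY]; exact Finset.sum_mul_sq_le_sq_mul_sq _ _ _
  have hPle : P ≤ Real.sqrt X * Real.sqrt Y := by
    calc P ≤ |P| := le_abs_self _
    _ = Real.sqrt (P^2) := (Real.sqrt_sq_eq_abs _).symm
    _ ≤ Real.sqrt (X*Y) := Real.sqrt_le_sqrt hCS
    _ = Real.sqrt X * Real.sqrt Y := Real.sqrt_mul hXnn _
  have hexp : ∑ i, (l * f i + m * g i)^2 = l^2*X + 2*l*m*P + m^2*Y := by
    rw [hX, hY, hP]; exact sum_sq_comb f g l m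
  have hsqX : (Real.sqrt X)^2 = X := Real.sq_sqrt hXnn
  have hsqY : (Real.sqrt Y)^2 = Y := Real.sq_sqrt hYnn
  have hbound : ∑ i, (l * f i + m * g i)^2
      ≤ (l * Real.sqrt X + m * Real.sqrt Y)^2 := by
    rw [hexp]
    have h2 : 2*l*m*P ≤ 2*l*m*(Real.sqrt X * Real.sqrt Y) :=
      mul_le_mul_of_nonneg_left hPle (by positivity)
    nlinarith [hsqX, hsqY]
  calc Real.sqrt (∑ i, (l * f i + m * g i)^2)
      ≤ Real.sqrt ((l * Real.sqrt X + m * Real.sqrt Y)^2) := Real.sqrt_le_sqrt hbound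
  _ = l * Real.sqrt X + m * Real.sqrt Y := Real.sqrt_sq (by positivity)
  _ = l * Real.sqrt (∑ i, (f i)^2) + m * Real.sqrt (∑ i, (g i)^2) := by rw [hX, hY]

lemma dot_split {n : ℕ} (c x : Fin (n+1) → ℝ) :
    dot c x = (∑ i, tl c i * tl x i) + c (Fin.last n) * x (Fin.last n) := by
  rw [dot, Fin.sum_univ_castSucc]; rfl

lemma dot_cont {n : ℕ} (c : Fin n → ℝ) : Continuous fun x : Fin n → ℝ => dot c x :=
  continuous_finset_sum _ fun i _ => continuous_const.mul (continuous_apply i)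

lemma sumsq_cont {n : ℕ} : Continuous fun x : Fin (n+1) → ℝ => ∑ i, (tl x i)^2 :=
  continuous_finset_sum _ fun i _ => ((continuous_apply i.castSucc).pow 2)

lemma soc_closed (n : ℕ) : IsClosed (soc n) :=
  isClosed_le (Real.continuous_sqrt.comp sumsq_cont) (continuous_apply _)

lemma mem_soc_facts {n : ℕ} {x : Fin (n+1) → ℝ} (hx : x ∈ soc n) :
    0 ≤ x (Fin.last n) ∧ (∑ i, (tl x i)^2) ≤ (x (Fin.last n))^2 := by
  have hs : Real.sqrt (∑ i, (tl x i)^2) ≤ x (Fin.last n) := hx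
  have hnn : 0 ≤ x (Fin.last n) := le_trans (Real.sqrt_nonneg _) hs
  refine ⟨hnn, ?_⟩
  have h1 : (Real.sqrt (∑ i, (tl x i)^2))^2 ≤ (x (Fin.last n))^2 :=
    pow_le_pow_left₀ (Real.sqrt_nonneg _) hs 2
  rwa [Real.sq_sqrt (Finset.sum_nonneg fun i _ => sq_nonneg _)] at h1

lemma bform_cs {n : ℕ} (a f g : Fin n → ℝ) :
    ((∑ i, (a i)^2) * (∑ i, f i * g i) - (∑ i, a i * f i)*(∑ i, a i * g i))^2
      ≤ ((∑ i, (a i)^2) * (∑ i, (f i)^2) - (∑ i, a i * f i)^2)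
        * ((∑ i, (a i)^2) * (∑ i, (g i)^2) - (∑ i, a i * g i)^2) := by
  obtain ⟨M, hM⟩ : ∃ M : ℝ, M = ∑ i, (a i)^2 := ⟨_, rfl⟩
  obtain ⟨X, hX⟩ : ∃ X : ℝ, X = ∑ i, (f i)^2 := ⟨_, rfl⟩
  obtain ⟨Y, hY⟩ : ∃ Y : ℝ, Y = ∑ i, (g i)^2 := ⟨_, rfl⟩
  obtain ⟨P, hP⟩ : ∃ P : ℝ, P = ∑ i, f i * g i := ⟨_, rfl⟩
  obtain ⟨ax, hax⟩ : ∃ v : ℝ, v = ∑ i, a i * f i := ⟨_, rfl⟩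
  obtain ⟨ay, hay⟩ : ∃ v : ℝ, v = ∑ i, a i * g i := ⟨_, rfl⟩
  rw [← hM, ← hX, ← hY, ← hP, ← hax, ← hay]
  have hq : ∀ t : ℝ, 0 ≤ (M*Y - ay^2)*(t*t) + (2*(M*P - ax*ay))*t + (M*X - ax^2) := by
    intro t
    have hcs : (∑ i, a i * (f i + t * g i))^2
        ≤ (∑ i, (a i)^2) * (∑ i, (f i + t * g i)^2) :=
      Finset.sum_mul_sq_le_sq_mul_sq _ _ _
    have e1 : ∑ i, a i * (f i + t * g i) = ax + t*ay := by
      rw [hax, hay, Finset.mul_sum, ← Finset.sum_add_distrib]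
      exact Finset.sum_congr rfl fun i _ => by ring
    have e2 : ∑ i, (f i + t * g i)^2 = X + 2*t*P + t^2*Y := by
      rw [hX, hP, hY, Finset.mul_sum, Finset.mul_sum, ← Finset.sum_add_distrib,
        ← Finset.sum_add_distrib]
      exact Finset.sum_congr rfl fun i _ => by ring
    rw [e1, e2, ← hM] at hcs
    nlinarith [hcs]
  have hd := discrim_le_zero hq
  rw [discrim] at hd
  nlinarith [hd]

lemma dot_smul_add {n : ℕ} (b : ℝ) (c d x : Fin n → ℝ) :
    dot (b • c + d) x = b * dot c x + dot d x := by
  simp only [dot, Finset.mul_sum, ← Finset.sum_add_distrib]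
  exact Finset.sum_congr rfl fun i _ => by
    simp only [Pi.add_apply, Pi.smul_apply, smul_eq_mul]; ring

lemma dot_smul_sub {n : ℕ} (b : ℝ) (c d x : Fin n → ℝ) :
    dot (b • c - d) x = b * dot c x - dot d x := by
  simp only [dot, Finset.mul_sum, ← Finset.sum_sub_distrib]
  exact Finset.sum_congr rfl fun i _ => by
    simp only [Pi.sub_apply, Pi.smul_apply, smul_eq_mul]; ring

lemma dot_comb {n : ℕ} (c x y : Fin n → ℝ) (l m : ℝ) :
    dot c (l • x + m • y) = l * dot c x + m * dot c y := by
  simp only [dot, Finset.mul_sum, ← Finset.sum_add_distrib]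
  exact Finset.sum_congr rfl fun i _ => by
    simp only [Pi.add_apply, Pi.smul_apply, smul_eq_mul]; ring

theorem stmt_5 {n : ℕ}
    (c₁ c₂ : Fin (n+1) → ℝ) (c₁₀ c₂₀ : ℝ)
    (hc₁₀ : c₁₀ = 0 ∨ c₁₀ = 1 ∨ c₁₀ = -1)
    (hc₂₀ : c₂₀ = 0 ∨ c₂₀ = 1 ∨ c₂₀ = -1)
    (hord : c₂₀ ≤ c₁₀)
    (C₁ C₂ : Set (Fin (n+1) → ℝ))
    (hC₁ : C₁ = {x ∈ soc n | c₁₀ ≤ dot c₁ x})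
    (hC₂ : C₂ = {x ∈ soc n | c₂₀ ≤ dot c₂ x})
    (h12 : ¬ C₁ ⊆ C₂) (h21 : ¬ C₂ ⊆ C₁)
    (hsf₁ : (C₁ ∩ interior (soc n)).Nonempty)
    (hsf₂ : (C₂ ∩ interior (soc n)).Nonempty)
    (β : ℝ) (hβ : 0 < β) (hβc : c₂₀ ≤ β * c₁₀)
    (hout : β • c₁ - c₂ ∉ soc n ∧ -(β • c₁ - c₂) ∉ soc n) :
    ∀ x ∈ closure (convexHull ℝ (C₁ ∪ C₂)),
      2 * c₂₀ - dot (β • c₁ + c₂) x ≤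
        Real.sqrt ((dot (β • c₁ - c₂) x)^2 +
          ((∑ i, (tl (β • c₁ - c₂) i)^2) - ((β • c₁ - c₂) (Fin.last n))^2) *
            ((x (Fin.last n))^2 - ∑ i, (tl x i)^2)) := by
  obtain ⟨hout1, hout2⟩ := hout
  -- N > 0
  have hMA : ((β • c₁ - c₂) (Fin.last n))^2 < ∑ i, (tl (β • c₁ - c₂) i)^2 := by
    simp only [soc, Set.mem_setOf_eq, not_le] at hout1 hout2
    have he : ∑ i, (tl (-(β • c₁ - c₂)) i)^2 = ∑ i, (tl (β • c₁ - c₂) i)^2 :=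
      Finset.sum_congr rfl fun i _ => by
        rw [show tl (-(β • c₁ - c₂)) i = -(tl (β • c₁ - c₂) i) from rfl, neg_sq]
    rw [he] at hout2
    have hneg : (-(β • c₁ - c₂)) (Fin.last n) = -((β • c₁ - c₂) (Fin.last n)) := rfl
    rw [hneg] at hout2
    have hsum : 0 ≤ ∑ i, (tl (β • c₁ - c₂) i)^2 := Finset.sum_nonneg fun i _ => sq_nonneg _
    nlinarith [Real.sq_sqrt hsum, Real.sqrt_nonneg (∑ i, (tl (β • c₁ - c₂) i)^2)]
  suffices hsub : closure (convexHull ℝ (C₁ ∪ C₂)) ⊆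
      {x : Fin (n+1) → ℝ | x ∈ soc n ∧
        2 * c₂₀ - dot (β • c₁ + c₂) x ≤
          Real.sqrt ((dot (β • c₁ - c₂) x)^2 +
            ((∑ i, (tl (β • c₁ - c₂) i)^2) - ((β • c₁ - c₂) (Fin.last n))^2) *
              ((x (Fin.last n))^2 - ∑ i, (tl x i)^2))} by
    intro x hx; exact (hsub hx).2
  apply closure_minimal
  · apply convexHull_min
    · -- C₁ ∪ C₂ is inside the set
      rintro x (hx | hx)
      · rw [hC₁] at hx
        obtain ⟨hxsoc, hxc⟩ := hx
        refine ⟨hxsoc, ?_⟩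
        obtain ⟨hxn, hX⟩ := mem_soc_facts hxsoc
        have hNpos : 0 ≤ (∑ i, (tl (β • c₁ - c₂) i)^2) - ((β • c₁ - c₂) (Fin.last n))^2 := by
          linarith
        have h5 : (dot (β • c₁ - c₂) x)^2 ≤ (dot (β • c₁ - c₂) x)^2 +
            ((∑ i, (tl (β • c₁ - c₂) i)^2) - ((β • c₁ - c₂) (Fin.last n))^2) *
              ((x (Fin.last n))^2 - ∑ i, (tl x i)^2) :=
          le_add_of_nonneg_right (mul_nonneg hNpos (by linarith))
        have h6 := Real.le_sqrt_of_sq_le h5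
        have hd1 : dot (β • c₁ - c₂) x = β * dot c₁ x - dot c₂ x := dot_smul_sub β c₁ c₂ x
        have hd2 : dot (β • c₁ + c₂) x = β * dot c₁ x + dot c₂ x := dot_smul_add β c₁ c₂ x
        have hc : c₂₀ ≤ β * dot c₁ x :=
          le_trans hβc (mul_le_mul_of_nonneg_left hxc hβ.le)
        linarith
      · rw [hC₂] at hx
        obtain ⟨hxsoc, hxc⟩ := hx
        refine ⟨hxsoc, ?_⟩
        obtain ⟨hxn, hX⟩ := mem_soc_facts hxsoc
        have hNpos : 0 ≤ (∑ i, (tl (β • c₁ - c₂) i)^2) - ((β • c₁ - c₂) (Fin.last n))^2 := by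
          linarith
        have h5 : (-(dot (β • c₁ - c₂) x))^2 ≤ (dot (β • c₁ - c₂) x)^2 +
            ((∑ i, (tl (β • c₁ - c₂) i)^2) - ((β • c₁ - c₂) (Fin.last n))^2) *
              ((x (Fin.last n))^2 - ∑ i, (tl x i)^2) := by
          rw [neg_sq]
          exact le_add_of_nonneg_right (mul_nonneg hNpos (by linarith))
        have h6 := Real.le_sqrt_of_sq_le h5
        have hd1 : dot (β • c₁ - c₂) x = β * dot c₁ x - dot c₂ x := dot_smul_sub β c₁ c₂ x
        have hd2 : dot (β • c₁ + c₂) x = β * dot c₁ x + dot c₂ x := dot_smul_add β c₁ c₂ x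
        linarith
    · -- convexity
      intro x hx y hy l m hl hm hlm
      obtain ⟨hxsoc, hxineq⟩ := hx
      obtain ⟨hysoc, hyineq⟩ := hy
      obtain ⟨hxn, hX⟩ := mem_soc_facts hxsoc
      obtain ⟨hyn, hY⟩ := mem_soc_facts hysoc
      have htlz : ∀ i : Fin n, tl (l • x + m • y) i = l * tl x i + m * tl y i := fun i => rfl
      have hzlast : (l • x + m • y) (Fin.last n) = l * x (Fin.last n) + m * y (Fin.last n) := rfl
      have hsumz : ∑ i, (tl (l • x + m • y) i)^2 = ∑ i, (l * tl x i + m * tl y i)^2 :=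
        Finset.sum_congr rfl fun i _ => by rw [htlz i]
      constructor
      · -- z ∈ soc n
        show Real.sqrt (∑ i, (tl (l • x + m • y) i)^2) ≤ (l • x + m • y) (Fin.last n)
        rw [hsumz, hzlast]
        calc Real.sqrt (∑ i, (l * tl x i + m * tl y i)^2)
            ≤ l * Real.sqrt (∑ i, (tl x i)^2) + m * Real.sqrt (∑ i, (tl y i)^2) :=
              sqrt_sum_sq_comb_le _ _ _ _ hl hm
        _ ≤ l * x (Fin.last n) + m * y (Fin.last n) :=
              add_le_add (mul_le_mul_of_nonneg_left hxsoc hl)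
                (mul_le_mul_of_nonneg_left hysoc hm)
      · -- the inequality at z
        have hcsx : (∑ i, tl (β • c₁ - c₂) i * tl x i)^2
            ≤ (∑ i, (tl (β • c₁ - c₂) i)^2) * (∑ i, (tl x i)^2) :=
          Finset.sum_mul_sq_le_sq_mul_sq _ _ _
        have hcsy : (∑ i, tl (β • c₁ - c₂) i * tl y i)^2
            ≤ (∑ i, (tl (β • c₁ - c₂) i)^2) * (∑ i, (tl y i)^2) :=
          Finset.sum_mul_sq_le_sq_mul_sq _ _ _
        have hcsB := bform_cs (tl (β • c₁ - c₂)) (tl x) (tl y)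
        have key := key_scalar (∑ i, (tl (β • c₁ - c₂) i)^2) ((β • c₁ - c₂) (Fin.last n))
          (∑ i, tl (β • c₁ - c₂) i * tl x i) (∑ i, tl (β • c₁ - c₂) i * tl y i)
          (x (Fin.last n)) (y (Fin.last n)) (∑ i, (tl x i)^2) (∑ i, (tl y i)^2)
          (∑ i, tl x i * tl y i) hMA hcsx hcsy hcsB hX hxn hY hyn
        have hsx : dot (β • c₁ - c₂) x = (∑ i, tl (β • c₁ - c₂) i * tl x i)
            + (β • c₁ - c₂) (Fin.last n) * x (Fin.last n) := dot_split _ x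
        have hsy : dot (β • c₁ - c₂) y = (∑ i, tl (β • c₁ - c₂) i * tl y i)
            + (β • c₁ - c₂) (Fin.last n) * y (Fin.last n) := dot_split _ y
        obtain ⟨Ex, hEx⟩ : ∃ E : ℝ, E = (dot (β • c₁ - c₂) x)^2 +
            ((∑ i, (tl (β • c₁ - c₂) i)^2) - ((β • c₁ - c₂) (Fin.last n))^2) *
              ((x (Fin.last n))^2 - ∑ i, (tl x i)^2) := ⟨_, rfl⟩
        obtain ⟨Ey, hEy⟩ : ∃ E : ℝ, E = (dot (β • c₁ - c₂) y)^2 +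
            ((∑ i, (tl (β • c₁ - c₂) i)^2) - ((β • c₁ - c₂) (Fin.last n))^2) *
              ((y (Fin.last n))^2 - ∑ i, (tl y i)^2) := ⟨_, rfl⟩
        have hExnn : 0 ≤ Ex := by
          rw [hEx]
          exact add_nonneg (sq_nonneg _) (mul_nonneg (by linarith) (by linarith))
        have hEynn : 0 ≤ Ey := by
          rw [hEy]
          exact add_nonneg (sq_nonneg _) (mul_nonneg (by linarith) (by linarith))
        obtain ⟨Qxy, hQxy⟩ : ∃ Q : ℝ, Q = (dot (β • c₁ - c₂) x) * (dot (β • c₁ - c₂) y) +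
            ((∑ i, (tl (β • c₁ - c₂) i)^2) - ((β • c₁ - c₂) (Fin.last n))^2) *
              (x (Fin.last n) * y (Fin.last n) - ∑ i, tl x i * tl y i) := ⟨_, rfl⟩
        have hQkey : Real.sqrt (Ex*Ey) ≤ Qxy := by
          rw [hEx, hEy, hQxy, hsx, hsy]
          exact key
        -- expansion of Ez
        have hdotz : dot (β • c₁ - c₂) (l • x + m • y)
            = l * dot (β • c₁ - c₂) x + m * dot (β • c₁ - c₂) y := dot_comb _ x y l m
        have hsum2 : ∑ i, (tl (l • x + m • y) i)^2
            = l^2 * (∑ i, (tl x i)^2) + 2*l*m*(∑ i, tl x i * tl y i)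
              + m^2 * (∑ i, (tl y i)^2) := by
          rw [hsumz]; exact sum_sq_comb _ _ l m
        have hEz : (dot (β • c₁ - c₂) (l • x + m • y))^2 +
            ((∑ i, (tl (β • c₁ - c₂) i)^2) - ((β • c₁ - c₂) (Fin.last n))^2) *
              (((l • x + m • y) (Fin.last n))^2 - ∑ i, (tl (l • x + m • y) i)^2)
            = l^2*Ex + m^2*Ey + 2*l*m*Qxy := by
          rw [hdotz, hsum2, hzlast, hEx, hEy, hQxy]; ring
        have hsqrtEz : l * Real.sqrt Ex + m * Real.sqrt Ey ≤
            Real.sqrt ((dot (β • c₁ - c₂) (l • x + m • y))^2 +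
              ((∑ i, (tl (β • c₁ - c₂) i)^2) - ((β • c₁ - c₂) (Fin.last n))^2) *
                (((l • x + m • y) (Fin.last n))^2 - ∑ i, (tl (l • x + m • y) i)^2)) := by
          apply Real.le_sqrt_of_sq_le
          have e1 : (Real.sqrt Ex)^2 = Ex := Real.sq_sqrt hExnn
          have e2 : (Real.sqrt Ey)^2 = Ey := Real.sq_sqrt hEynn
          have e3 : Real.sqrt Ex * Real.sqrt Ey = Real.sqrt (Ex*Ey) :=
            (Real.sqrt_mul hExnn _).symm
          have h7 : 2*l*m*(Real.sqrt Ex * Real.sqrt Ey) ≤ 2*l*m*Qxy := by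
            rw [e3]; exact mul_le_mul_of_nonneg_left hQkey (by positivity)
          calc (l * Real.sqrt Ex + m * Real.sqrt Ey)^2
              = l^2*(Real.sqrt Ex)^2 + m^2*(Real.sqrt Ey)^2
                + 2*l*m*(Real.sqrt Ex * Real.sqrt Ey) := by ring
          _ = l^2*Ex + m^2*Ey + 2*l*m*(Real.sqrt Ex * Real.sqrt Ey) := by rw [e1, e2]
          _ ≤ l^2*Ex + m^2*Ey + 2*l*m*Qxy := by linarith
          _ = _ := hEz.symm
        have hLz : 2 * c₂₀ - dot (β • c₁ + c₂) (l • x + m • y)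
            = l * (2 * c₂₀ - dot (β • c₁ + c₂) x) + m * (2 * c₂₀ - dot (β • c₁ + c₂) y) := by
          rw [dot_comb _ x y l m]
          linear_combination (2*c₂₀) * hlm.symm
        show 2 * c₂₀ - dot (β • c₁ + c₂) (l • x + m • y) ≤ _
        rw [hLz]
        have hx1 : l * (2 * c₂₀ - dot (β • c₁ + c₂) x) ≤ l * Real.sqrt Ex :=
          mul_le_mul_of_nonneg_left (hEx ▸ hxineq) hl
        have hy1 : m * (2 * c₂₀ - dot (β • c₁ + c₂) y) ≤ m * Real.sqrt Ey :=
          mul_le_mul_of_nonneg_left (hEy ▸ hyineq) hm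
        calc l * (2 * c₂₀ - dot (β • c₁ + c₂) x) + m * (2 * c₂₀ - dot (β • c₁ + c₂) y)
            ≤ l * Real.sqrt Ex + m * Real.sqrt Ey := add_le_add hx1 hy1
        _ ≤ _ := hsqrtEz
  · -- closedness
    exact IsClosed.inter (soc_closed n)
      (isClosed_le (continuous_const.sub (dot_cont _))
        (Real.continuous_sqrt.comp
          (((dot_cont _).pow 2).add (continuous_const.mul
            (((continuous_apply (Fin.last n)).pow 2).sub sumsq_cont)))))
end
end

section
/- Let S ⊂ ℝⁿ be a closed, convex, pointed set with recession cone rec S, and S₁ = {x ∈ S : c₁ᵀx ≥ c₁₀}, S₂ = {x ∈ S : c₂ᵀx ≥ c₂₀}, with S₁ ⊄ S₂, S₂ ⊄ S₁. If {r ∈ rec S : c₂ᵀr = 0} ⊆ {r ∈ rec S : c₁ᵀr ≥ 0} and {r ∈ rec S : c₁ᵀr = 0} ⊆ {r ∈ rec S : c₂ᵀr ≥ 0}, then conv(S₁ ∪ S₂) is closed. -/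
open Set

/-- Recession cone of a set `S ⊆ ℝⁿ`. -/
def recCone {n : ℕ} (S : Set (Fin n → ℝ)) : Set (Fin n → ℝ) :=
  {r | ∀ x ∈ S, ∀ t : ℝ, 0 ≤ t → x + t • r ∈ S}

/-!
A point of the closure is a limit of `(1 - θₖ) • aₖ + θₖ • bₖ` with `aₖ ∈ S₁`, `bₖ ∈ S₂`.
Pointedness of `S` keeps `(1 - θₖ) • aₖ` bounded: otherwise its normalized limit `d` and the
normalized limit `-d` of `θₖ • bₖ` would both be recession directions. Along a subsequence
`θₖ → m`, `(1 - θₖ) • aₖ → x` and `θₖ • bₖ → y`. For `0 < m < 1` the limit `x + y` is a convex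
combination of a point of `S₁` and a point of `S₂`. For `m = 0` we get `x ∈ S₁` and a recession
direction `y` of `S` with `c₂ᵀy ≥ 0`: if `c₂ᵀy = 0` the hypothesis gives `c₁ᵀy ≥ 0`, so
`x + y ∈ S₁`; otherwise `x + y` lies on the segment from `x` to a point `x + s • y ∈ S₂`.
The case `m = 1` is symmetric.
-/

open Filter Topology Metric

theorem Filter.Tendsto.of_smul {ι E : Type*} [AddCommGroup E] [Module ℝ E] [TopologicalSpace E]
    [ContinuousSMul ℝ E] {l : Filter ι} {μ : ι → ℝ} {a : ι → E} {m : ℝ} {x : E}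
    (hx : Tendsto (fun k => μ k • a k) l (𝓝 x)) (hm : m ≠ 0) (hμ : Tendsto μ l (𝓝 m)) :
    Tendsto a l (𝓝 (m⁻¹ • x)) := by
  refine ((hμ.inv₀ hm).smul hx).congr' ?_
  filter_upwards [hμ.eventually_ne hm] with k hk
  rw [smul_smul, inv_mul_cancel₀ hk, one_smul]

section Halfspace

variable {n : ℕ}

theorem dot_add (c x y : Fin n → ℝ) : dot c (x + y) = dot c x + dot c y :=
  dotProduct_add c x y

theorem dot_smul (c : Fin n → ℝ) (t : ℝ) (x : Fin n → ℝ) : dot c (t • x) = t * dot c x :=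
  dotProduct_smul t c x

theorem continuous_dot (c : Fin n → ℝ) : Continuous (dot c) :=
  continuous_const.dotProduct continuous_id

theorem isClosed_halfspace {S : Set (Fin n → ℝ)} (hS : IsClosed S) (c : Fin n → ℝ) (γ : ℝ) :
    IsClosed {x ∈ S | γ ≤ dot c x} :=
  hS.inter (isClosed_le continuous_const (continuous_dot c))

theorem convex_halfspace {S : Set (Fin n → ℝ)} (hS : Convex ℝ S) (c : Fin n → ℝ) (γ : ℝ) :
    Convex ℝ {x ∈ S | γ ≤ dot c x} :=
  hS.inter (convex_halfSpace_ge ⟨dot_add c, dot_smul c⟩ γ)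

end Halfspace

section Recession

variable {n : ℕ} {S : Set (Fin n → ℝ)}

theorem mem_recCone_of_tendsto_smul (hS : IsClosed S) (hSconv : Convex ℝ S)
    {b : ℕ → Fin n → ℝ} (hb : ∀ k, b k ∈ S) {t : ℕ → ℝ} (ht0 : ∀ k, 0 ≤ t k)
    (ht : Tendsto t atTop (𝓝 0)) {y : Fin n → ℝ} (hy : Tendsto (fun k => t k • b k) atTop (𝓝 y)) :
    y ∈ recCone S := by
  intro x hx s hs
  have hst : Tendsto (fun k => s * t k) atTop (𝓝 0) := by simpa using ht.const_mul s
  have hlim : Tendsto (fun k => (1 - s * t k) • x + (s * t k) • b k) atTop (𝓝 (x + s • y)) := by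
    simpa [mul_smul] using ((hst.const_sub 1).smul_const x).add (hy.const_smul s)
  refine hS.mem_of_tendsto hlim ?_
  filter_upwards [hst.eventually (ge_mem_nhds one_pos)] with k hk
  exact hSconv hx (hb k) (by linarith) (mul_nonneg hs (ht0 k)) (by ring)

theorem dot_nonneg_of_tendsto_smul {c : Fin n → ℝ} {γ : ℝ} {b : ℕ → Fin n → ℝ}
    (hb : ∀ k, γ ≤ dot c (b k)) {t : ℕ → ℝ} (ht0 : ∀ k, 0 ≤ t k) (ht : Tendsto t atTop (𝓝 0))
    {y : Fin n → ℝ} (hy : Tendsto (fun k => t k • b k) atTop (𝓝 y)) : 0 ≤ dot c y := by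
  refine le_of_tendsto_of_tendsto (by simpa using ht.mul_const γ)
    (((continuous_dot c).tendsto y).comp hy) (Eventually.of_forall fun k => ?_)
  simpa [dot_smul] using mul_le_mul_of_nonneg_left (hb k) (ht0 k)

theorem exists_frequently_norm_smul_le (hS : IsClosed S) (hSconv : Convex ℝ S)
    (hSpointed : ∀ r, r ∈ recCone S → -r ∈ recCone S → r = 0)
    {a b : ℕ → Fin n → ℝ} (ha : ∀ k, a k ∈ S) (hb : ∀ k, b k ∈ S) {μ ν : ℕ → ℝ}
    (hμ : ∀ k, μ k ∈ Icc (0 : ℝ) 1) (hν : ∀ k, ν k ∈ Icc (0 : ℝ) 1) {z : Fin n → ℝ}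
    (hz : Tendsto (fun k => μ k • a k + ν k • b k) atTop (𝓝 z)) :
    ∃ R, ∃ᶠ k in atTop, ‖μ k • a k‖ ≤ R := by
  by_contra! hfar
  have hx : Tendsto (fun k => ‖μ k • a k‖) atTop atTop :=
    tendsto_atTop.2 fun R => (hfar R).mono fun _ => le_of_lt
  obtain ⟨d, hd1, φ, hφ, hd⟩ := tendsto_subseq_of_frequently_bounded
    (isBounded_sphere (x := 0) (r := 1)) (x := fun k => ‖μ k • a k‖⁻¹ • μ k • a k)
    ((hfar 0).mono fun k hk => by
      simpa using norm_smul_inv_norm (𝕜 := ℝ) (norm_pos_iff.1 hk)).frequently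
  rw [isClosed_sphere.closure_eq, mem_sphere_zero_iff_norm] at hd1
  set r := fun k => ‖μ (φ k) • a (φ k)‖⁻¹
  replace hd : Tendsto (fun k => r k • μ (φ k) • a (φ k)) atTop (𝓝 d) := hd
  have hr : Tendsto r atTop (𝓝 0) := (hx.comp hφ.tendsto_atTop).inv_tendsto_atTop
  have hr0 : ∀ k, 0 ≤ r k := fun k => inv_nonneg.2 (norm_nonneg _)
  have hsmall : ∀ {c : ℕ → ℝ}, (∀ k, c k ∈ Icc (0 : ℝ) 1) →
      Tendsto (fun k => r k * c (φ k)) atTop (𝓝 0) := fun hc =>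
    squeeze_zero (fun k => mul_nonneg (hr0 k) (hc _).1)
      (fun k => mul_le_of_le_one_right (hr0 k) (hc _).2) hr
  have hdrec : d ∈ recCone S :=
    mem_recCone_of_tendsto_smul hS hSconv (fun k => ha (φ k))
      (fun k => mul_nonneg (hr0 k) (hμ _).1) (hsmall hμ) (by simpa [mul_smul] using hd)
  have hdneg : -d ∈ recCone S := by
    refine mem_recCone_of_tendsto_smul hS hSconv (fun k => hb (φ k))
      (fun k => mul_nonneg (hr0 k) (hν _).1) (hsmall hν) ?_
    have := (hr.smul (hz.comp hφ.tendsto_atTop)).sub hd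
    simp only [zero_smul, zero_sub] at this
    refine this.congr fun k => ?_
    simp [mul_smul, smul_add]
  simp [hSpointed d hdrec hdneg] at hd1

end Recession

section Join

variable {n : ℕ} {S : Set (Fin n → ℝ)} {c c' : Fin n → ℝ} {γ γ' : ℝ}

theorem add_mem_convexJoin_of_mem_recCone (h : ∀ r ∈ recCone S, dot c' r = 0 → 0 ≤ dot c r)
    (hne : {x ∈ S | γ' ≤ dot c' x}.Nonempty) {x d : Fin n → ℝ} (hx : x ∈ {x ∈ S | γ ≤ dot c x})
    (hd : d ∈ recCone S) (hc'd : 0 ≤ dot c' d) :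
    x + d ∈ convexJoin ℝ {x ∈ S | γ ≤ dot c x} {x ∈ S | γ' ≤ dot c' x} := by
  rcases hc'd.eq_or_lt with hc'd | hc'd
  · refine subset_convexJoin_left hne ⟨by simpa using hd x hx.1 1 zero_le_one, ?_⟩
    rw [dot_add]
    linarith [hx.2, h d hd hc'd.symm]
  set s := max 1 ((γ' - dot c' x) / dot c' d)
  have hs : 0 < s := lt_of_lt_of_le one_pos (le_max_left _ _)
  have hy : x + s • d ∈ {x ∈ S | γ' ≤ dot c' x} := by
    refine ⟨hd x hx.1 s hs.le, ?_⟩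
    rw [dot_add, dot_smul]
    linarith [(div_le_iff₀ hc'd).1 (le_max_right 1 ((γ' - dot c' x) / dot c' d))]
  refine mem_convexJoin.2 ⟨x, hx, x + s • d, hy, 1 - s⁻¹, s⁻¹, ?_, by positivity, by ring, ?_⟩
  · linarith [inv_le_one_of_one_le₀ (le_max_left 1 ((γ' - dot c' x) / dot c' d))]
  · rw [smul_add, smul_smul, inv_mul_cancel₀ hs.ne', one_smul, ← add_assoc, ← add_smul]
    simp

theorem add_mem_convexJoin_of_tendsto_smul (hS : IsClosed S) (hSconv : Convex ℝ S)
    (h : ∀ r ∈ recCone S, dot c' r = 0 → 0 ≤ dot c r) (hne : {x ∈ S | γ' ≤ dot c' x}.Nonempty)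
    {x : Fin n → ℝ} (hx : x ∈ {x ∈ S | γ ≤ dot c x}) {b : ℕ → Fin n → ℝ}
    (hb : ∀ k, b k ∈ {x ∈ S | γ' ≤ dot c' x}) {t : ℕ → ℝ} (ht0 : ∀ k, 0 ≤ t k)
    (ht : Tendsto t atTop (𝓝 0)) {y : Fin n → ℝ} (hy : Tendsto (fun k => t k • b k) atTop (𝓝 y)) :
    x + y ∈ convexJoin ℝ {x ∈ S | γ ≤ dot c x} {x ∈ S | γ' ≤ dot c' x} :=
  add_mem_convexJoin_of_mem_recCone h hne hx
    (mem_recCone_of_tendsto_smul hS hSconv (fun k => (hb k).1) ht0 ht hy)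
    (dot_nonneg_of_tendsto_smul (fun k => (hb k).2) ht0 ht hy)

theorem add_mem_convexJoin_of_tendsto (hS : IsClosed S) (hSconv : Convex ℝ S)
    (h : ∀ r ∈ recCone S, dot c' r = 0 → 0 ≤ dot c r)
    (h' : ∀ r ∈ recCone S, dot c r = 0 → 0 ≤ dot c' r)
    (hne : {x ∈ S | γ ≤ dot c x}.Nonempty) (hne' : {x ∈ S | γ' ≤ dot c' x}.Nonempty)
    {a b : ℕ → Fin n → ℝ} (ha : ∀ k, a k ∈ {x ∈ S | γ ≤ dot c x})
    (hb : ∀ k, b k ∈ {x ∈ S | γ' ≤ dot c' x}) {θ : ℕ → ℝ} (hθ : ∀ k, θ k ∈ Icc (0 : ℝ) 1)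
    {m : ℝ} {x y : Fin n → ℝ} (hm : Tendsto θ atTop (𝓝 m))
    (hx : Tendsto (fun k => (1 - θ k) • a k) atTop (𝓝 x))
    (hy : Tendsto (fun k => θ k • b k) atTop (𝓝 y)) :
    x + y ∈ convexJoin ℝ {x ∈ S | γ ≤ dot c x} {x ∈ S | γ' ≤ dot c' x} := by
  have hm' : Tendsto (fun k => 1 - θ k) atTop (𝓝 (1 - m)) := hm.const_sub 1
  have hC := isClosed_halfspace hS c γ
  have hC' := isClosed_halfspace hS c' γ'
  rcases eq_or_ne m 0 with rfl | hm0
  · have hxmem : x ∈ {x ∈ S | γ ≤ dot c x} := hC.mem_of_tendsto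
      (by simpa using hx.of_smul one_ne_zero (by simpa using hm')) (.of_forall ha)
    exact add_mem_convexJoin_of_tendsto_smul hS hSconv h hne' hxmem hb (fun k => (hθ k).1) hm hy
  rcases eq_or_ne m 1 with rfl | hm1
  · have hymem : y ∈ {x ∈ S | γ' ≤ dot c' x} := hC'.mem_of_tendsto
      (by simpa using hy.of_smul one_ne_zero hm) (.of_forall hb)
    rw [add_comm, convexJoin_comm]
    exact add_mem_convexJoin_of_tendsto_smul hS hSconv h' hne hymem ha
      (fun k => sub_nonneg.2 (hθ k).2) (by simpa using hm') hx
  have hm1' : 1 - m ≠ 0 := sub_ne_zero.2 hm1.symm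
  refine mem_convexJoin.2 ⟨(1 - m)⁻¹ • x, hC.mem_of_tendsto (hx.of_smul hm1' hm') (.of_forall ha),
    m⁻¹ • y, hC'.mem_of_tendsto (hy.of_smul hm0 hm) (.of_forall hb), ?_⟩
  rw [segment_eq_image]
  exact ⟨m, isClosed_Icc.mem_of_tendsto hm (.of_forall hθ), by simp [smul_smul, hm0, hm1']⟩

end Join

theorem stmt_15 {n : ℕ} (S : Set (Fin n → ℝ))
    (hSclosed : IsClosed S) (hSconv : Convex ℝ S)
    (hSpointed : ∀ r, r ∈ recCone S → -r ∈ recCone S → r = 0)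
    (c₁ c₂ : Fin n → ℝ) (c₁₀ c₂₀ : ℝ)
    (S₁ S₂ : Set (Fin n → ℝ))
    (hS₁ : S₁ = {x ∈ S | c₁₀ ≤ dot c₁ x})
    (hS₂ : S₂ = {x ∈ S | c₂₀ ≤ dot c₂ x})
    (h12 : ¬ S₁ ⊆ S₂) (h21 : ¬ S₂ ⊆ S₁)
    (h1 : {r ∈ recCone S | dot c₂ r = 0} ⊆ {r ∈ recCone S | 0 ≤ dot c₁ r})
    (h2 : {r ∈ recCone S | dot c₁ r = 0} ⊆ {r ∈ recCone S | 0 ≤ dot c₂ r}) :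
    IsClosed (convexHull ℝ (S₁ ∪ S₂)) := by
  subst hS₁ hS₂
  have hne₁ := (nonempty_of_not_subset h12).mono sdiff_subset
  have hne₂ := (nonempty_of_not_subset h21).mono sdiff_subset
  rw [(convex_halfspace hSconv c₁ c₁₀).convexHull_union (convex_halfspace hSconv c₂ c₂₀) hne₁ hne₂]
  refine isClosed_of_closure_subset fun z hz => ?_
  obtain ⟨w, hw, hwz⟩ := mem_closure_iff_seq_limit.mp hz
  have hw' : ∀ k, ∃ a ∈ {x ∈ S | c₁₀ ≤ dot c₁ x}, ∃ b ∈ {x ∈ S | c₂₀ ≤ dot c₂ x},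
      ∃ θ ∈ Icc (0 : ℝ) 1, (1 - θ) • a + θ • b = w k := fun k => by
    simpa only [segment_eq_image, mem_image] using mem_convexJoin.1 (hw k)
  choose a ha b hb θ hθ hab using hw'
  have hz' : Tendsto (fun k => (1 - θ k) • a k + θ k • b k) atTop (𝓝 z) := by
    simpa only [hab] using hwz
  obtain ⟨R, hR⟩ := exists_frequently_norm_smul_le hSclosed hSconv hSpointed
    (fun k => (ha k).1) (fun k => (hb k).1)
    (fun k => ⟨sub_nonneg.2 (hθ k).2, sub_le_self _ (hθ k).1⟩) hθ hz'
  obtain ⟨⟨x, m⟩, -, φ, hφ, hlim⟩ := tendsto_subseq_of_frequently_bounded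
    ((isBounded_closedBall (x := 0) (r := R)).prod (isBounded_Icc (0 : ℝ) 1))
    (x := fun k => ((1 - θ k) • a k, θ k))
    (hR.mono fun k hk => mk_mem_prod (mem_closedBall_zero_iff.2 hk) (hθ k))
  have hy : Tendsto (fun k => θ (φ k) • b (φ k)) atTop (𝓝 (z - x)) :=
    ((hz'.comp hφ.tendsto_atTop).sub hlim.fst_nhds).congr fun k => by simp
  simpa using add_mem_convexJoin_of_tendsto hSclosed hSconv
    (fun r hr h => (h1 ⟨hr, h⟩).2) (fun r hr h => (h2 ⟨hr, h⟩).2) hne₁ hne₂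
    (fun k => ha (φ k)) (fun k => hb (φ k)) (fun k => hθ (φ k)) hlim.snd_nhds hlim.fst_nhds hy
end
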